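/- arXiv:2110.02440 — 2 statements merged into one kernel-verified Lean document; each statement's English description precedes it below -/
import Mathlib

section
/- Under consistency, Z ⊥ Y(z,m) | X, Z ⊥ M(z) | X, and Y(z,m) ⊥ M | (Z,L,X), the interventional direct effect is identified: IDE = Σ_{x,l,m} (E[Y | Z=1, L=l, M=m, X=x] P(L=l | Z=1, X=x) − E[Y | Z=0, L=l, M=m, X=x] P(L=l | Z=0, X=x)) P(M=m | Z=0, X=x) P(X=x). -/
open Finset

noncomputable def pr {Ω : Type*} [Fintype Ω] (P : Ω → ℝ) (A : Set Ω) : ℝ :=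
  ∑ ω : Ω, A.indicator P ω

noncomputable def cpr {Ω : Type*} [Fintype Ω] (P : Ω → ℝ) (A B : Set Ω) : ℝ :=
  pr P (A ∩ B) / pr P B

noncomputable def cexp {Ω : Type*} [Fintype Ω] (P : Ω → ℝ) (f : Ω → ℝ) (B : Set Ω) : ℝ :=
  (∑ ω : Ω, B.indicator (fun ω => P ω * f ω) ω) / pr P B

noncomputable def ex {Ω : Type*} [Fintype Ω] (P : Ω → ℝ) (f : Ω → ℝ) : ℝ :=
  ∑ ω : Ω, P ω * f ω

def CondIndepFun {Ω : Type*} [Fintype Ω] (P : Ω → ℝ) {α β γ : Type*}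
    (A : Ω → α) (B : Ω → β) (C : Ω → γ) : Prop :=
  ∀ a b c,
    pr P {ω | A ω = a ∧ B ω = b ∧ C ω = c} * pr P {ω | C ω = c} =
      pr P {ω | A ω = a ∧ C ω = c} * pr P {ω | B ω = b ∧ C ω = c}

lemma pr_nonneg' {Ω : Type*} [Fintype Ω] {P : Ω → ℝ} (hP : ∀ ω, 0 ≤ P ω) (A : Set Ω) :
    0 ≤ pr P A :=
  Finset.sum_nonneg fun ω _ => Set.indicator_nonneg (fun ω _ => hP ω) ω

lemma pr_mono' {Ω : Type*} [Fintype Ω] {P : Ω → ℝ} (hP : ∀ ω, 0 ≤ P ω) {A B : Set Ω}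
    (h : A ⊆ B) : pr P A ≤ pr P B :=
  Finset.sum_le_sum fun ω _ => Set.indicator_le_indicator_of_subset h (fun _ => hP _) ω

lemma decomp' {Ω : Type*} [Fintype Ω] (P : Ω → ℝ) (f : Ω → ℝ) (A : Set Ω) :
    (∑ ω : Ω, A.indicator (fun ω => P ω * f ω) ω)
      = ∑ b ∈ Finset.image f Finset.univ, b * pr P ({ω | f ω = b} ∩ A) := by
  unfold pr
  simp_rw [Finset.mul_sum]
  rw [Finset.sum_comm]
  refine Finset.sum_congr rfl fun ω _ => ?_
  rw [Finset.sum_eq_single (f ω)]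
  · by_cases hω : ω ∈ A <;> simp [Set.indicator, hω, mul_comm]
  · intro b _ hb
    have : ω ∉ ({ω | f ω = b} ∩ A) := fun h => hb h.1.symm
    simp [Set.indicator_of_notMem this]
  · intro h; exact absurd (Finset.mem_image_of_mem f (Finset.mem_univ ω)) h

lemma partition' {Ω ι : Type*} [Fintype Ω] [Fintype ι] (g : Ω → ι) (h : Ω → ℝ) (A : Set Ω) :
    (∑ ω : Ω, A.indicator h ω) = ∑ i : ι, ∑ ω : Ω, ({ω | g ω = i} ∩ A).indicator h ω := by
  rw [Finset.sum_comm]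
  refine Finset.sum_congr rfl fun ω _ => ?_
  rw [Finset.sum_eq_single (g ω)]
  · by_cases hω : ω ∈ A <;> simp [Set.indicator, hω]
  · intro i _ hi
    have : ω ∉ ({ω | g ω = i} ∩ A) := fun hh => hi hh.1.symm
    simp [Set.indicator_of_notMem this]
  · intro h; exact absurd (Finset.mem_univ (g ω)) h

/-- Identification of the interventional direct effect (Proposition 3.2, IDE). -/
theorem ide_identification {Ω 𝓜 𝓛 𝓧 : Type*} [Fintype Ω] [Fintype 𝓜] [Fintype 𝓛] [Fintype 𝓧]
    (P : Ω → ℝ) (hP : ∀ ω, 0 ≤ P ω) (hP1 : ∑ ω : Ω, P ω = 1)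
    (Z : Ω → Bool) (L : Ω → 𝓛) (M : Ω → 𝓜) (X : Ω → 𝓧) (Y : Ω → ℝ)
    (Ypo : Bool → 𝓜 → Ω → ℝ) (Mpo : Bool → Ω → 𝓜)
    (hpos : ∀ z l m x, 0 < pr P {ω | Z ω = z ∧ L ω = l ∧ M ω = m ∧ X ω = x})
    (hconsM : ∀ ω, Mpo (Z ω) ω = M ω)
    (hconsY : ∀ ω, Y ω = Ypo (Z ω) (M ω) ω)
    (hA2 : ∀ z m, CondIndepFun P Z (fun ω => Ypo z m ω) X)
    (hA3 : ∀ z, CondIndepFun P Z (Mpo z) X)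
    (hA4 : ∀ z m, CondIndepFun P (fun ω => Ypo z m ω) M (fun ω => (Z ω, L ω, X ω))) :
    -- IDE = E[Y(1, G(0|X))] − E[Y(0, G(0|X))]:
    (∑ x : 𝓧, ∑ m : 𝓜,
        cexp P (fun ω => Ypo true m ω) {ω | X ω = x} *
          cpr P {ω | M ω = m} {ω | Z ω = false ∧ X ω = x} * pr P {ω | X ω = x}) -
      (∑ x : 𝓧, ∑ m : 𝓜,
        cexp P (fun ω => Ypo false m ω) {ω | X ω = x} *
          cpr P {ω | M ω = m} {ω | Z ω = false ∧ X ω = x} * pr P {ω | X ω = x}) =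
      ∑ x : 𝓧, ∑ l : 𝓛, ∑ m : 𝓜,
        (cexp P Y {ω | Z ω = true ∧ L ω = l ∧ M ω = m ∧ X ω = x} *
            cpr P {ω | L ω = l} {ω | Z ω = true ∧ X ω = x} -
          cexp P Y {ω | Z ω = false ∧ L ω = l ∧ M ω = m ∧ X ω = x} *
            cpr P {ω | L ω = l} {ω | Z ω = false ∧ X ω = x}) *
          cpr P {ω | M ω = m} {ω | Z ω = false ∧ X ω = x} *
          pr P {ω | X ω = x} := by
  rcases isEmpty_or_nonempty Ω with hΩ | hΩ
  · simp [pr, cexp, cpr]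
  obtain ⟨ω₀⟩ := hΩ
  -- the key identification, for each fixed z, m, x
  have key : ∀ (z : Bool) (m : 𝓜) (x : 𝓧),
      cexp P (fun ω => Ypo z m ω) {ω | X ω = x}
        = ∑ l : 𝓛, cexp P Y {ω | Z ω = z ∧ L ω = l ∧ M ω = m ∧ X ω = x}
            * cpr P {ω | L ω = l} {ω | Z ω = z ∧ X ω = x} := by
    intro z m x
    set f : Ω → ℝ := fun ω => Ypo z m ω with hf
    -- positivity
    have hX : 0 < pr P {ω | X ω = x} :=
      lt_of_lt_of_le (hpos z (L ω₀) m x) (pr_mono' hP (fun ω h => h.2.2.2))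
    have hZX : 0 < pr P {ω | Z ω = z ∧ X ω = x} :=
      lt_of_lt_of_le (hpos z (L ω₀) m x) (pr_mono' hP (fun ω h => ⟨h.1, h.2.2.2⟩))
    have hZLX : ∀ l, 0 < pr P {ω | Z ω = z ∧ L ω = l ∧ X ω = x} := fun l =>
      lt_of_lt_of_le (hpos z l m x) (pr_mono' hP (fun ω h => ⟨h.1, h.2.1, h.2.2.2⟩))
    have hZLMX : ∀ l, 0 < pr P {ω | Z ω = z ∧ L ω = l ∧ M ω = m ∧ X ω = x} :=
      fun l => hpos z l m x
    -- Step A : from (A2), conditioning on Z=z does not change E[f | X=x]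
    have stepA :
        (∑ ω : Ω, ({ω | Z ω = z ∧ X ω = x}).indicator (fun ω => P ω * f ω) ω)
            * pr P {ω | X ω = x}
          = pr P {ω | Z ω = z ∧ X ω = x}
            * (∑ ω : Ω, ({ω | X ω = x}).indicator (fun ω => P ω * f ω) ω) := by
      rw [decomp' P f, decomp' P f, Finset.sum_mul, Finset.mul_sum]
      refine Finset.sum_congr rfl fun b _ => ?_
      have h2 := hA2 z m z b x
      have e1 : ({ω | f ω = b} ∩ {ω | Z ω = z ∧ X ω = x})
          = {ω | Z ω = z ∧ Ypo z m ω = b ∧ X ω = x} := by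
        ext ω; simp only [Set.mem_inter_iff, Set.mem_setOf_eq, hf]; tauto
      have e2 : ({ω | f ω = b} ∩ {ω | X ω = x}) = {ω | Ypo z m ω = b ∧ X ω = x} := by
        ext ω; simp only [Set.mem_inter_iff, Set.mem_setOf_eq, hf]
      rw [e1, e2, mul_assoc, h2, ← mul_assoc,
        mul_comm b (pr P {ω | Z ω = z ∧ X ω = x}), mul_assoc]
    -- Step C : from (A4), conditioning additionally on M=m does not change the cond. mean
    have stepC : ∀ l,
        (∑ ω : Ω, ({ω | Z ω = z ∧ L ω = l ∧ M ω = m ∧ X ω = x}).indicator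
              (fun ω => P ω * f ω) ω)
            * pr P {ω | Z ω = z ∧ L ω = l ∧ X ω = x}
          = (∑ ω : Ω, ({ω | Z ω = z ∧ L ω = l ∧ X ω = x}).indicator
              (fun ω => P ω * f ω) ω)
            * pr P {ω | Z ω = z ∧ L ω = l ∧ M ω = m ∧ X ω = x} := by
      intro l
      rw [decomp' P f, decomp' P f, Finset.sum_mul, Finset.sum_mul]
      refine Finset.sum_congr rfl fun b _ => ?_
      have h4 := hA4 z m b m (z, l, x)
      have e1 : ({ω | f ω = b} ∩ {ω | Z ω = z ∧ L ω = l ∧ M ω = m ∧ X ω = x})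
          = {ω | Ypo z m ω = b ∧ M ω = m ∧ (Z ω, L ω, X ω) = (z, l, x)} := by
        ext ω
        simp only [Set.mem_inter_iff, Set.mem_setOf_eq, hf, Prod.mk.injEq]
        tauto
      have e2 : ({ω | f ω = b} ∩ {ω | Z ω = z ∧ L ω = l ∧ X ω = x})
          = {ω | Ypo z m ω = b ∧ (Z ω, L ω, X ω) = (z, l, x)} := by
        ext ω
        simp only [Set.mem_inter_iff, Set.mem_setOf_eq, hf, Prod.mk.injEq]
        try tauto
      have e3 : {ω | (Z ω, L ω, X ω) = (z, l, x)} = {ω | Z ω = z ∧ L ω = l ∧ X ω = x} := by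
        ext ω; simp [Prod.ext_iff]
      have e4 : {ω | M ω = m ∧ (Z ω, L ω, X ω) = (z, l, x)}
          = {ω | Z ω = z ∧ L ω = l ∧ M ω = m ∧ X ω = x} := by
        ext ω; simp only [Set.mem_setOf_eq, Prod.mk.injEq]; tauto
      rw [e3, e4] at h4
      rw [e1, e2, mul_assoc, h4, ← mul_assoc]
    -- Step D : consistency on the event {Z=z, L=l, M=m, X=x}
    have stepD : ∀ l,
        (∑ ω : Ω, ({ω | Z ω = z ∧ L ω = l ∧ M ω = m ∧ X ω = x}).indicator
            (fun ω => P ω * Y ω) ω)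
          = (∑ ω : Ω, ({ω | Z ω = z ∧ L ω = l ∧ M ω = m ∧ X ω = x}).indicator
            (fun ω => P ω * f ω) ω) := by
      intro l
      refine Finset.sum_congr rfl fun ω _ => ?_
      by_cases hω : ω ∈ {ω | Z ω = z ∧ L ω = l ∧ M ω = m ∧ X ω = x}
      · rw [Set.indicator_of_mem hω, Set.indicator_of_mem hω]
        have hY : Y ω = f ω := by
          rw [hconsY ω, hf]
          simp only [hω.1, hω.2.2.1]
        rw [hY]
      · rw [Set.indicator_of_notMem hω, Set.indicator_of_notMem hω]
    -- Step B : partition the numerator over values of L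
    have stepB :
        (∑ ω : Ω, ({ω | Z ω = z ∧ X ω = x}).indicator (fun ω => P ω * f ω) ω)
          = ∑ l : 𝓛, ∑ ω : Ω, ({ω | Z ω = z ∧ L ω = l ∧ X ω = x}).indicator
              (fun ω => P ω * f ω) ω := by
      rw [partition' L (fun ω => P ω * f ω) {ω | Z ω = z ∧ X ω = x}]
      refine Finset.sum_congr rfl fun l _ => ?_
      have e : ({ω | L ω = l} ∩ {ω | Z ω = z ∧ X ω = x})
          = {ω | Z ω = z ∧ L ω = l ∧ X ω = x} := by
        ext ω; simp only [Set.mem_inter_iff, Set.mem_setOf_eq]; tauto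
      rw [e]
    -- assemble
    have hcexp : cexp P f {ω | X ω = x}
        = (∑ ω : Ω, ({ω | Z ω = z ∧ X ω = x}).indicator (fun ω => P ω * f ω) ω)
            / pr P {ω | Z ω = z ∧ X ω = x} := by
      unfold cexp
      rw [div_eq_div_iff hX.ne' hZX.ne']
      linarith [stepA]
    rw [hcexp, stepB, Finset.sum_div]
    refine Finset.sum_congr rfl fun l _ => ?_
    unfold cexp cpr
    have e : ({ω | L ω = l} ∩ {ω | Z ω = z ∧ X ω = x})
        = {ω | Z ω = z ∧ L ω = l ∧ X ω = x} := by
      ext ω; simp only [Set.mem_inter_iff, Set.mem_setOf_eq]; tauto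
    rw [e, stepD l]
    rw [div_mul_div_comm, div_eq_div_iff hZX.ne' (mul_pos (hZLMX l) hZX).ne']
    linear_combination (-pr P {ω | Z ω = z ∧ X ω = x}) * (stepC l)
  -- final assembly
  rw [← Finset.sum_sub_distrib]
  refine Finset.sum_congr rfl fun x _ => ?_
  rw [← Finset.sum_sub_distrib, Finset.sum_comm]
  refine Finset.sum_congr rfl fun m _ => ?_
  rw [key true m x, key false m x, ← sub_mul, ← sub_mul, ← Finset.sum_sub_distrib,
    Finset.sum_mul, Finset.sum_mul]
end

section
/- Under consistency, Z ⊥ Y(z,m) | X, Z ⊥ M(z) | X, Y(z,m) ⊥ M | (Z,L,X), and positivity, the interventional direct effect admits the representation IDE = E[ 1{Z=0} Y / P(Z=0 | X) · (E[Y | Z=1, L, M, X] P(L | Z=1, X)) / (E[Y | Z=0, L, M, X] P(L | Z=0, M, X)) ] − E[ 1{Z=0} Y / P(Z=0 | X) · P(L | Z=0, X) / P(L | Z=0, M, X) ]. -/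
open Finset

section Aux
variable {Ω : Type*} [Fintype Ω] (P : Ω → ℝ)

lemma pr_eq_sum (Q : Ω → Prop) [DecidablePred Q] :
    pr P {ω | Q ω} = ∑ ω, if Q ω then P ω else 0 := by
  unfold pr
  refine Finset.sum_congr rfl fun ω _ => ?_
  by_cases h : Q ω <;> simp [Set.indicator_apply, Set.mem_setOf_eq, h]

lemma ind_eq_sum (Q : Ω → Prop) [DecidablePred Q] (t : Ω → ℝ) :
    (∑ ω, ({ω | Q ω}).indicator t ω) = ∑ ω, if Q ω then t ω else 0 := by
  refine Finset.sum_congr rfl fun ω _ => ?_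
  by_cases h : Q ω <;> simp [Set.indicator_apply, Set.mem_setOf_eq, h]

lemma pr_congr (Q R : Ω → Prop) (h : ∀ ω, Q ω ↔ R ω) :
    pr P {ω | Q ω} = pr P {ω | R ω} := by
  congr 1; ext ω; exact h ω

lemma sum_if_congr (Q R : Ω → Prop) [DecidablePred Q] [DecidablePred R]
    (h : ∀ ω, Q ω ↔ R ω) (t : Ω → ℝ) :
    (∑ ω, if Q ω then t ω else 0) = ∑ ω, if R ω then t ω else 0 :=
  Finset.sum_congr rfl fun ω _ => if_congr (h ω) rfl rfl

lemma collapse {κ : Type*} [Fintype κ] [DecidableEq κ] (g : Ω → κ) (F : Ω → κ → ℝ) :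
    (∑ k, ∑ ω, if g ω = k then F ω k else 0) = ∑ ω, F ω (g ω) := by
  rw [Finset.sum_comm]
  refine Finset.sum_congr rfl fun ω _ => ?_
  rw [Finset.sum_ite_eq univ (g ω) (F ω)]
  simp

lemma decomp {κ : Type*} [Fintype κ] [DecidableEq κ] (g : Ω → κ) (Q : Ω → Prop)
    [DecidablePred Q] (t : Ω → ℝ) :
    (∑ k, ∑ ω, if g ω = k ∧ Q ω then t ω else 0) = ∑ ω, if Q ω then t ω else 0 := by
  have h := collapse (Ω := Ω) g (fun ω _ => if Q ω then t ω else 0)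
  rw [← h]
  refine Finset.sum_congr rfl fun k _ => Finset.sum_congr rfl fun ω _ => ?_
  by_cases h1 : g ω = k <;> by_cases h2 : Q ω <;> simp [h1, h2]


lemma cpr_eq (Q R : Ω → Prop) :
    cpr P {ω | Q ω} {ω | R ω} = pr P {ω | Q ω ∧ R ω} / pr P {ω | R ω} := by
  unfold cpr
  have : {ω | Q ω} ∩ {ω | R ω} = {ω | Q ω ∧ R ω} := by
    ext ω; simp [Set.mem_setOf_eq]
  rw [this]

lemma pr_decomp {κ : Type*} [Fintype κ] [DecidableEq κ] (g : Ω → κ) (Q : Ω → Prop)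
    [DecidablePred Q] :
    pr P {ω | Q ω} = ∑ k, pr P {ω | g ω = k ∧ Q ω} := by
  rw [pr_eq_sum]
  rw [← decomp g Q P]
  exact Finset.sum_congr rfl fun k _ => (pr_eq_sum P _).symm

lemma val_decomp (f : Ω → ℝ) (Q : Ω → Prop) [DecidablePred Q] :
    (∑ ω, if Q ω then P ω * f ω else 0)
      = ∑ y ∈ Finset.image f univ, y * pr P {ω | f ω = y ∧ Q ω} := by
  have : ∀ y, y * pr P {ω | f ω = y ∧ Q ω} = ∑ ω, if f ω = y ∧ Q ω then y * P ω else 0 := by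
    intro y
    rw [pr_eq_sum, Finset.mul_sum]
    exact Finset.sum_congr rfl fun ω _ => by by_cases h : f ω = y ∧ Q ω <;> simp [h]
  simp_rw [this]
  rw [Finset.sum_comm]
  refine Finset.sum_congr rfl fun ω _ => ?_
  by_cases h2 : Q ω
  · have : ∀ y ∈ Finset.image f univ, (if f ω = y ∧ Q ω then y * P ω else 0)
        = if f ω = y then y * P ω else 0 := fun y _ => by
      by_cases h1 : f ω = y <;> simp [h1, h2]
    rw [Finset.sum_congr rfl this, Finset.sum_ite_eq (Finset.image f univ) (f ω)
      (fun y => y * P ω)]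
    simp [h2, Finset.mem_image, mul_comm]
  · simp [h2]

lemma indep_sum_left {β γ : Type*} (f : Ω → ℝ) (B : Ω → β) (C : Ω → γ)
    (h : CondIndepFun P f B C) (b : β) (c : γ) [DecidableEq β] [DecidableEq γ] :
    (∑ ω, if B ω = b ∧ C ω = c then P ω * f ω else 0) * pr P {ω | C ω = c}
      = (∑ ω, if C ω = c then P ω * f ω else 0) * pr P {ω | B ω = b ∧ C ω = c} := by
  rw [val_decomp P f (fun ω => B ω = b ∧ C ω = c), val_decomp P f (fun ω => C ω = c),
    Finset.sum_mul, Finset.sum_mul]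
  refine Finset.sum_congr rfl fun y _ => ?_
  have := h y b c
  rw [mul_assoc, mul_assoc, this]

lemma indep_sum_right {α γ : Type*} (f : Ω → ℝ) (A : Ω → α) (C : Ω → γ)
    (h : CondIndepFun P A f C) (a : α) (c : γ) [DecidableEq α] [DecidableEq γ] :
    (∑ ω, if A ω = a ∧ C ω = c then P ω * f ω else 0) * pr P {ω | C ω = c}
      = (∑ ω, if C ω = c then P ω * f ω else 0) * pr P {ω | A ω = a ∧ C ω = c} := by
  rw [val_decomp P f (fun ω => A ω = a ∧ C ω = c), val_decomp P f (fun ω => C ω = c),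
    Finset.sum_mul, Finset.sum_mul]
  refine Finset.sum_congr rfl fun y _ => ?_
  have h2 := h a y c
  rw [mul_assoc, mul_assoc]
  rw [pr_congr P (fun ω => f ω = y ∧ A ω = a ∧ C ω = c)
    (fun ω => A ω = a ∧ f ω = y ∧ C ω = c) (fun ω => by tauto)]
  rw [h2]
  ring

end Aux

section Grp
variable {Ω 𝓛 𝓜 𝓧 : Type*} [Fintype Ω] [Fintype 𝓛] [Fintype 𝓜] [Fintype 𝓧]
    [DecidableEq 𝓛] [DecidableEq 𝓜] [DecidableEq 𝓧]

lemma ex_group (P : Ω → ℝ) (Z : Ω → Bool) (L : Ω → 𝓛) (M : Ω → 𝓜) (X : Ω → 𝓧) (Y : Ω → ℝ)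
    (W : 𝓧 → 𝓜 → 𝓛 → ℝ) :
    (∑ ω, (if Z ω = false then P ω * Y ω else 0) * W (X ω) (M ω) (L ω))
      = ∑ x, ∑ m, ∑ l,
          (∑ ω, if Z ω = false ∧ L ω = l ∧ M ω = m ∧ X ω = x then P ω * Y ω else 0) * W x m l := by
  trans (∑ k : 𝓧 × 𝓜 × 𝓛, ∑ ω, if (X ω, M ω, L ω) = k then
      (if Z ω = false then P ω * Y ω else 0) * W k.1 k.2.1 k.2.2 else 0)
  · exact (collapse (fun ω => (X ω, M ω, L ω))
      (fun ω k => (if Z ω = false then P ω * Y ω else 0) * W k.1 k.2.1 k.2.2)).symm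
  · rw [Fintype.sum_prod_type]
    refine Finset.sum_congr rfl fun x _ => ?_
    rw [Fintype.sum_prod_type]
    refine Finset.sum_congr rfl fun m _ => Finset.sum_congr rfl fun l _ => ?_
    rw [Finset.sum_mul]
    refine Finset.sum_congr rfl fun ω _ => ?_
    by_cases hz : Z ω = false <;> by_cases hx : X ω = x <;> by_cases hm : M ω = m <;>
      by_cases hl : L ω = l <;> simp [Prod.ext_iff, hz, hx, hm, hl]
end Grp

section Key
variable {Ω 𝓜 𝓛 𝓧 : Type*} [Fintype Ω] [Fintype 𝓜] [Fintype 𝓛] [Fintype 𝓧]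

lemma key_repr (P : Ω → ℝ) (hP1 : ∑ ω : Ω, P ω = 1)
    (Z : Ω → Bool) (L : Ω → 𝓛) (M : Ω → 𝓜) (X : Ω → 𝓧) (Y : Ω → ℝ)
    (Ypo : Bool → 𝓜 → Ω → ℝ)
    (hpos : ∀ z l m x, 0 < pr P {ω | Z ω = z ∧ L ω = l ∧ M ω = m ∧ X ω = x})
    (hposY : ∀ l m x, 0 < cexp P Y {ω | Z ω = false ∧ L ω = l ∧ M ω = m ∧ X ω = x})
    (hposL : ∀ z l m x, 0 < cpr P {ω | L ω = l} {ω | Z ω = z ∧ M ω = m ∧ X ω = x})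
    (hconsY : ∀ ω, Y ω = Ypo (Z ω) (M ω) ω)
    (hA2 : ∀ z m, CondIndepFun P Z (fun ω => Ypo z m ω) X)
    (hA4 : ∀ z m, CondIndepFun P (fun ω => Ypo z m ω) M (fun ω => (Z ω, L ω, X ω)))
    (z : Bool) :
    ex P (fun ω =>
        (if Z ω = false then Y ω else 0) / cpr P {ω' | Z ω' = false} {ω' | X ω' = X ω} *
          (cexp P Y {ω' | Z ω' = z ∧ L ω' = L ω ∧ M ω' = M ω ∧ X ω' = X ω} *
            cpr P {ω' | L ω' = L ω} {ω' | Z ω' = z ∧ X ω' = X ω}) /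
          (cexp P Y {ω' | Z ω' = false ∧ L ω' = L ω ∧ M ω' = M ω ∧ X ω' = X ω} *
            cpr P {ω' | L ω' = L ω} {ω' | Z ω' = false ∧ M ω' = M ω ∧ X ω' = X ω})) =
    ∑ x : 𝓧, ∑ m : 𝓜,
        cexp P (fun ω => Ypo z m ω) {ω | X ω = x} *
          cpr P {ω | M ω = m} {ω | Z ω = false ∧ X ω = x} * pr P {ω | X ω = x} := by
  classical
  -- nonemptiness
  have hΩ : Nonempty Ω := by
    by_contra h
    rw [not_nonempty_iff] at h
    rw [Finset.univ_eq_empty, Finset.sum_empty] at hP1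
    norm_num at hP1
  haveI := hΩ
  haveI : Nonempty 𝓛 := ⟨L (Classical.arbitrary Ω)⟩
  haveI : Nonempty 𝓜 := ⟨M (Classical.arbitrary Ω)⟩
  -- positivity of coarser events
  have hp3 : ∀ z' m x, 0 < pr P {ω | Z ω = z' ∧ M ω = m ∧ X ω = x} := by
    intro z' m x
    rw [pr_decomp P L (fun ω => Z ω = z' ∧ M ω = m ∧ X ω = x)]
    refine Finset.sum_pos (fun l _ => ?_) Finset.univ_nonempty
    rw [pr_congr P _ (fun ω => Z ω = z' ∧ L ω = l ∧ M ω = m ∧ X ω = x) (fun ω => by tauto)]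
    exact hpos z' l m x
  have hpE3 : ∀ z' l x, 0 < pr P {ω | Z ω = z' ∧ L ω = l ∧ X ω = x} := by
    intro z' l x
    rw [pr_decomp P M (fun ω => Z ω = z' ∧ L ω = l ∧ X ω = x)]
    refine Finset.sum_pos (fun m _ => ?_) Finset.univ_nonempty
    rw [pr_congr P _ (fun ω => Z ω = z' ∧ L ω = l ∧ M ω = m ∧ X ω = x) (fun ω => by tauto)]
    exact hpos z' l m x
  have hp2 : ∀ z' x, 0 < pr P {ω | Z ω = z' ∧ X ω = x} := by
    intro z' x
    rw [pr_decomp P M (fun ω => Z ω = z' ∧ X ω = x)]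
    refine Finset.sum_pos (fun m _ => ?_) Finset.univ_nonempty
    rw [pr_congr P _ (fun ω => Z ω = z' ∧ M ω = m ∧ X ω = x) (fun ω => by tauto)]
    exact hp3 z' m x
  have hpx : ∀ x, 0 < pr P {ω | X ω = x} := by
    intro x
    rw [pr_decomp P Z (fun ω => X ω = x)]
    refine Finset.sum_pos (fun b _ => hp2 b x) Finset.univ_nonempty
  -- step 1: regroup the expectation
  have base : ex P (fun ω =>
        (if Z ω = false then Y ω else 0) / cpr P {ω' | Z ω' = false} {ω' | X ω' = X ω} *
          (cexp P Y {ω' | Z ω' = z ∧ L ω' = L ω ∧ M ω' = M ω ∧ X ω' = X ω} *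
            cpr P {ω' | L ω' = L ω} {ω' | Z ω' = z ∧ X ω' = X ω}) /
          (cexp P Y {ω' | Z ω' = false ∧ L ω' = L ω ∧ M ω' = M ω ∧ X ω' = X ω} *
            cpr P {ω' | L ω' = L ω} {ω' | Z ω' = false ∧ M ω' = M ω ∧ X ω' = X ω})) =
      ∑ x : 𝓧, ∑ m : 𝓜, ∑ l : 𝓛,
        (∑ ω, if Z ω = false ∧ L ω = l ∧ M ω = m ∧ X ω = x then P ω * Y ω else 0) *
          ((cexp P Y {ω' | Z ω' = z ∧ L ω' = l ∧ M ω' = m ∧ X ω' = x} *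
            cpr P {ω' | L ω' = l} {ω' | Z ω' = z ∧ X ω' = x}) /
           (cpr P {ω' | Z ω' = false} {ω' | X ω' = x} *
            (cexp P Y {ω' | Z ω' = false ∧ L ω' = l ∧ M ω' = m ∧ X ω' = x} *
             cpr P {ω' | L ω' = l} {ω' | Z ω' = false ∧ M ω' = m ∧ X ω' = x}))) := by
    rw [← ex_group P Z L M X Y (fun x m l =>
      (cexp P Y {ω' | Z ω' = z ∧ L ω' = l ∧ M ω' = m ∧ X ω' = x} *
            cpr P {ω' | L ω' = l} {ω' | Z ω' = z ∧ X ω' = x}) /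
           (cpr P {ω' | Z ω' = false} {ω' | X ω' = x} *
            (cexp P Y {ω' | Z ω' = false ∧ L ω' = l ∧ M ω' = m ∧ X ω' = x} *
             cpr P {ω' | L ω' = l} {ω' | Z ω' = false ∧ M ω' = m ∧ X ω' = x})))]
    unfold ex
    refine Finset.sum_congr rfl fun ω _ => ?_
    by_cases hz : Z ω = false <;> simp [hz] <;> ring
  rw [base]
  refine Finset.sum_congr rfl fun x _ => Finset.sum_congr rfl fun m _ => ?_
  -- notation for the atoms
  set px := pr P {ω | X ω = x} with hpx_def
  set p0x := pr P {ω | Z ω = false ∧ X ω = x} with hp0x_def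
  set pzx := pr P {ω | Z ω = z ∧ X ω = x} with hpzx_def
  set p3 := pr P {ω | Z ω = false ∧ M ω = m ∧ X ω = x} with hp3_def
  set Num1 := (∑ ω, if X ω = x then P ω * Ypo z m ω else 0) with hNum1_def
  set Num2 := (∑ ω, if Z ω = z ∧ X ω = x then P ω * Ypo z m ω else 0) with hNum2_def
  have hq : cpr P {ω' | Z ω' = false} {ω' | X ω' = x} = p0x / px := by
    rw [cpr_eq P (fun ω' => Z ω' = false) (fun ω' => X ω' = x)]
  -- per-cell identity
  have cell : ∀ l : 𝓛,
      (∑ ω, if Z ω = false ∧ L ω = l ∧ M ω = m ∧ X ω = x then P ω * Y ω else 0) *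
          ((cexp P Y {ω' | Z ω' = z ∧ L ω' = l ∧ M ω' = m ∧ X ω' = x} *
            cpr P {ω' | L ω' = l} {ω' | Z ω' = z ∧ X ω' = x}) /
           (cpr P {ω' | Z ω' = false} {ω' | X ω' = x} *
            (cexp P Y {ω' | Z ω' = false ∧ L ω' = l ∧ M ω' = m ∧ X ω' = x} *
             cpr P {ω' | L ω' = l} {ω' | Z ω' = false ∧ M ω' = m ∧ X ω' = x}))) =
      (∑ ω, if Z ω = z ∧ L ω = l ∧ X ω = x then P ω * Ypo z m ω else 0) *
        (p3 * px / (pzx * p0x)) := by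
    intro l
    set p4f := pr P {ω | Z ω = false ∧ L ω = l ∧ M ω = m ∧ X ω = x} with hp4f_def
    set p4z := pr P {ω | Z ω = z ∧ L ω = l ∧ M ω = m ∧ X ω = x} with hp4z_def
    set pE3 := pr P {ω | Z ω = z ∧ L ω = l ∧ X ω = x} with hpE3_def
    set Num3 := (∑ ω, if Z ω = z ∧ L ω = l ∧ X ω = x then P ω * Ypo z m ω else 0) with hNum3_def
    set Num4 := (∑ ω, if Z ω = z ∧ L ω = l ∧ M ω = m ∧ X ω = x then P ω * Ypo z m ω else 0)
      with hNum4_def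
    set Dc := cexp P Y {ω' | Z ω' = false ∧ L ω' = l ∧ M ω' = m ∧ X ω' = x} with hDc_def
    -- T = Dc * p4f
    have hT : (∑ ω, if Z ω = false ∧ L ω = l ∧ M ω = m ∧ X ω = x then P ω * Y ω else 0)
        = Dc * p4f := by
      rw [hDc_def]
      unfold cexp
      rw [ind_eq_sum (fun ω' => Z ω' = false ∧ L ω' = l ∧ M ω' = m ∧ X ω' = x)
        (fun ω => P ω * Y ω)]
      rw [div_mul_cancel₀]
      exact (hpos false l m x).ne'
    -- Cc = p4f / p3
    have hCc : cpr P {ω' | L ω' = l} {ω' | Z ω' = false ∧ M ω' = m ∧ X ω' = x} = p4f / p3 := by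
      rw [cpr_eq P (fun ω' => L ω' = l) (fun ω' => Z ω' = false ∧ M ω' = m ∧ X ω' = x)]
      rw [pr_congr P (fun ω => L ω = l ∧ Z ω = false ∧ M ω = m ∧ X ω = x)
        (fun ω => Z ω = false ∧ L ω = l ∧ M ω = m ∧ X ω = x) (fun ω => by tauto)]
    -- Bc = pE3 / pzx
    have hBc : cpr P {ω' | L ω' = l} {ω' | Z ω' = z ∧ X ω' = x} = pE3 / pzx := by
      rw [cpr_eq P (fun ω' => L ω' = l) (fun ω' => Z ω' = z ∧ X ω' = x)]
      rw [pr_congr P (fun ω => L ω = l ∧ Z ω = z ∧ X ω = x)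
        (fun ω => Z ω = z ∧ L ω = l ∧ X ω = x) (fun ω => by tauto)]
    -- Nc = Num4 / p4z (consistency)
    have hNc : cexp P Y {ω' | Z ω' = z ∧ L ω' = l ∧ M ω' = m ∧ X ω' = x} = Num4 / p4z := by
      unfold cexp
      rw [ind_eq_sum (fun ω' => Z ω' = z ∧ L ω' = l ∧ M ω' = m ∧ X ω' = x)
        (fun ω => P ω * Y ω)]
      congr 1
      refine Finset.sum_congr rfl fun ω _ => ?_
      by_cases h : Z ω = z ∧ L ω = l ∧ M ω = m ∧ X ω = x
      · rw [if_pos h, if_pos h, hconsY ω, h.1, h.2.2.1]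
      · rw [if_neg h, if_neg h]
    -- A4 : Num4 * pE3 = Num3 * p4z
    have hA4rel : Num4 * pE3 = Num3 * p4z := by
      have h := indep_sum_left P (fun ω => Ypo z m ω) M (fun ω => (Z ω, L ω, X ω))
        (hA4 z m) m (z, l, x)
      rw [sum_if_congr (fun ω => M ω = m ∧ (Z ω, L ω, X ω) = (z, l, x))
        (fun ω => Z ω = z ∧ L ω = l ∧ M ω = m ∧ X ω = x)
        (fun ω => by simp only [Prod.mk.injEq]; try tauto) (fun ω => P ω * Ypo z m ω)] at h
      rw [sum_if_congr (fun ω => (Z ω, L ω, X ω) = (z, l, x))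
        (fun ω => Z ω = z ∧ L ω = l ∧ X ω = x)
        (fun ω => by simp only [Prod.mk.injEq]; try tauto) (fun ω => P ω * Ypo z m ω)] at h
      rw [pr_congr P (fun ω => (Z ω, L ω, X ω) = (z, l, x))
        (fun ω => Z ω = z ∧ L ω = l ∧ X ω = x)
        (fun ω => by simp only [Prod.mk.injEq]; try tauto)] at h
      rw [pr_congr P (fun ω => M ω = m ∧ (Z ω, L ω, X ω) = (z, l, x))
        (fun ω => Z ω = z ∧ L ω = l ∧ M ω = m ∧ X ω = x)
        (fun ω => by simp only [Prod.mk.injEq]; try tauto)] at h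
      exact h
    have hNum4 : Num4 = Num3 * p4z / pE3 := by
      rw [eq_div_iff (hpE3 z l x).ne']
      exact hA4rel
    rw [hT, hq, hCc, hBc, hNc, hNum4]
    have h1 : Dc ≠ 0 := (hposY l m x).ne'
    have h2 : p4f ≠ 0 := (hpos false l m x).ne'
    have h3 : p4z ≠ 0 := (hpos z l m x).ne'
    have h4 : pE3 ≠ 0 := (hpE3 z l x).ne'
    have h5 : pzx ≠ 0 := (hp2 z x).ne'
    have h6 : p0x ≠ 0 := (hp2 false x).ne'
    have h7 : px ≠ 0 := (hpx x).ne'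
    have h8 : p3 ≠ 0 := (hp3 false m x).ne'
    field_simp
  rw [Finset.sum_congr rfl fun l _ => cell l]
  rw [← Finset.sum_mul]
  -- sum over l
  have hsum : (∑ l : 𝓛, ∑ ω, if Z ω = z ∧ L ω = l ∧ X ω = x then P ω * Ypo z m ω else 0)
      = Num2 := by
    rw [hNum2_def, ← decomp L (fun ω => Z ω = z ∧ X ω = x) (fun ω => P ω * Ypo z m ω)]
    refine Finset.sum_congr rfl fun l _ => ?_
    exact sum_if_congr (fun ω => Z ω = z ∧ L ω = l ∧ X ω = x)
      (fun ω => L ω = l ∧ Z ω = z ∧ X ω = x) (fun ω => by tauto) _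
  rw [hsum]
  -- A2
  have hA2rel : Num2 * px = Num1 * pzx := by
    have h := indep_sum_right P (fun ω => Ypo z m ω) Z X (hA2 z m) z x
    exact h
  have hNum2 : Num2 = Num1 * pzx / px := by
    rw [eq_div_iff (hpx x).ne']
    exact hA2rel
  have hcexp : cexp P (fun ω => Ypo z m ω) {ω | X ω = x} = Num1 / px := by
    unfold cexp
    rw [ind_eq_sum (fun ω => X ω = x) (fun ω => P ω * Ypo z m ω)]
  have hcpr : cpr P {ω | M ω = m} {ω | Z ω = false ∧ X ω = x} = p3 / p0x := by
    rw [cpr_eq P (fun ω => M ω = m) (fun ω => Z ω = false ∧ X ω = x)]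
    rw [pr_congr P (fun ω => M ω = m ∧ Z ω = false ∧ X ω = x)
      (fun ω => Z ω = false ∧ M ω = m ∧ X ω = x) (fun ω => by tauto)]
  rw [hNum2, hcexp, hcpr]
  have h5 : pzx ≠ 0 := (hp2 z x).ne'
  have h6 : p0x ≠ 0 := (hp2 false x).ne'
  have h7 : px ≠ 0 := (hpx x).ne'
  field_simp

end Key

/-- IPW representation of the IDE (Theorem 3.3). -/
theorem ide_ipw {Ω 𝓜 𝓛 𝓧 : Type*} [Fintype Ω] [Fintype 𝓜] [Fintype 𝓛] [Fintype 𝓧]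
    (P : Ω → ℝ) (hP : ∀ ω, 0 ≤ P ω) (hP1 : ∑ ω : Ω, P ω = 1)
    (Z : Ω → Bool) (L : Ω → 𝓛) (M : Ω → 𝓜) (X : Ω → 𝓧) (Y : Ω → ℝ)
    (Ypo : Bool → 𝓜 → Ω → ℝ) (Mpo : Bool → Ω → 𝓜)
    (hpos : ∀ z l m x, 0 < pr P {ω | Z ω = z ∧ L ω = l ∧ M ω = m ∧ X ω = x})
    (hposY : ∀ l m x, 0 < cexp P Y {ω | Z ω = false ∧ L ω = l ∧ M ω = m ∧ X ω = x})
    (hposL : ∀ z l m x, 0 < cpr P {ω | L ω = l} {ω | Z ω = z ∧ M ω = m ∧ X ω = x})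
    (hconsM : ∀ ω, Mpo (Z ω) ω = M ω)
    (hconsY : ∀ ω, Y ω = Ypo (Z ω) (M ω) ω)
    (hA2 : ∀ z m, CondIndepFun P Z (fun ω => Ypo z m ω) X)
    (hA3 : ∀ z, CondIndepFun P Z (Mpo z) X)
    (hA4 : ∀ z m, CondIndepFun P (fun ω => Ypo z m ω) M (fun ω => (Z ω, L ω, X ω))) :
    -- IDE = E[Y(1, G(0|X))] − E[Y(0, G(0|X))]:
    (∑ x : 𝓧, ∑ m : 𝓜,
        cexp P (fun ω => Ypo true m ω) {ω | X ω = x} *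
          cpr P {ω | M ω = m} {ω | Z ω = false ∧ X ω = x} * pr P {ω | X ω = x}) -
      (∑ x : 𝓧, ∑ m : 𝓜,
        cexp P (fun ω => Ypo false m ω) {ω | X ω = x} *
          cpr P {ω | M ω = m} {ω | Z ω = false ∧ X ω = x} * pr P {ω | X ω = x}) =
      ex P (fun ω =>
        (if Z ω = false then Y ω else 0) / cpr P {ω' | Z ω' = false} {ω' | X ω' = X ω} *
          (cexp P Y {ω' | Z ω' = true ∧ L ω' = L ω ∧ M ω' = M ω ∧ X ω' = X ω} *
            cpr P {ω' | L ω' = L ω} {ω' | Z ω' = true ∧ X ω' = X ω}) /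
          (cexp P Y {ω' | Z ω' = false ∧ L ω' = L ω ∧ M ω' = M ω ∧ X ω' = X ω} *
            cpr P {ω' | L ω' = L ω} {ω' | Z ω' = false ∧ M ω' = M ω ∧ X ω' = X ω})) -
      ex P (fun ω =>
        (if Z ω = false then Y ω else 0) / cpr P {ω' | Z ω' = false} {ω' | X ω' = X ω} *
          cpr P {ω' | L ω' = L ω} {ω' | Z ω' = false ∧ X ω' = X ω} /
          cpr P {ω' | L ω' = L ω} {ω' | Z ω' = false ∧ M ω' = M ω ∧ X ω' = X ω}) := by
  have e2 : ex P (fun ω =>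
        (if Z ω = false then Y ω else 0) / cpr P {ω' | Z ω' = false} {ω' | X ω' = X ω} *
          cpr P {ω' | L ω' = L ω} {ω' | Z ω' = false ∧ X ω' = X ω} /
          cpr P {ω' | L ω' = L ω} {ω' | Z ω' = false ∧ M ω' = M ω ∧ X ω' = X ω}) =
      ex P (fun ω =>
        (if Z ω = false then Y ω else 0) / cpr P {ω' | Z ω' = false} {ω' | X ω' = X ω} *
          (cexp P Y {ω' | Z ω' = false ∧ L ω' = L ω ∧ M ω' = M ω ∧ X ω' = X ω} *
            cpr P {ω' | L ω' = L ω} {ω' | Z ω' = false ∧ X ω' = X ω}) /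
          (cexp P Y {ω' | Z ω' = false ∧ L ω' = L ω ∧ M ω' = M ω ∧ X ω' = X ω} *
            cpr P {ω' | L ω' = L ω} {ω' | Z ω' = false ∧ M ω' = M ω ∧ X ω' = X ω})) := by
    unfold ex
    refine Finset.sum_congr rfl fun ω _ => ?_
    beta_reduce
    congr 1
    have hD : cexp P Y {ω' | Z ω' = false ∧ L ω' = L ω ∧ M ω' = M ω ∧ X ω' = X ω} ≠ 0 :=
      (hposY (L ω) (M ω) (X ω)).ne'
    rw [mul_div_assoc, mul_div_assoc, mul_div_mul_left _ _ hD]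
  rw [e2,
    key_repr P hP1 Z L M X Y Ypo hpos hposY hposL hconsY hA2 hA4 true,
    key_repr P hP1 Z L M X Y Ypo hpos hposY hposL hconsY hA2 hA4 false]
end
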